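/- Let Φ be an irreducible reduced crystallographic simply-laced root system with base Δ and highest root θ; let α ∈ Δ be an extreme Heisenberg root with neighbour β. Then every root μ ∈ Φ satisfies ⟨μ,β⟩ + c_α(μ) ≤ 2. (This is the paper's assertion that the maximal eigenvalue on 𝔤 of the element Z := β^∨ + S_α/2 is 2.) -/

import Mathlib

/-!
Cauchy–Schwarz and integrality of Cartan integers give `⟪μ, β⟫ ≤ 1` unless `μ = β`, and the
Heisenberg condition gives `c_α(μ) ≤ 1` unless `μ = θ`. In the remaining case `⟪θ, β⟫ ≤ 0`,
since otherwise `θ - β` would be a root with `α`-coefficient `2` other than `θ`.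
-/

open scoped InnerProductSpace

namespace PaperRS

variable {E : Type*} [NormedAddCommGroup E] [InnerProductSpace ℝ E]

/-- A reduced crystallographic simply-laced root system, normalized so that every root has
squared length `2` (hence `⟪δ, ε⟫` is the Cartan integer `⟨δ, ε^∨⟩`). -/
structure IsRootSystem (Φ : Set E) : Prop where
  finite : Φ.Finite
  nonzero : (0 : E) ∉ Φ
  span_top : Submodule.span ℝ Φ = ⊤
  norm_two : ∀ α ∈ Φ, ⟪α, α⟫_ℝ = 2
  reduced : ∀ α ∈ Φ, ∀ t : ℝ, t • α ∈ Φ → t = 1 ∨ t = -1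
  cartan_int : ∀ α ∈ Φ, ∀ β ∈ Φ, ∃ n : ℤ, ⟪α, β⟫_ℝ = (n : ℝ)
  reflect_mem : ∀ α ∈ Φ, ∀ β ∈ Φ, β - ⟪β, α⟫_ℝ • α ∈ Φ

/-- Irreducibility: `Φ` is nonempty and cannot be split into two mutually orthogonal parts. -/
def IsIrreducible (Φ : Set E) : Prop :=
  Φ.Nonempty ∧ ∀ Φ₁ Φ₂ : Set E, Φ = Φ₁ ∪ Φ₂ →
    (∀ a ∈ Φ₁, ∀ b ∈ Φ₂, ⟪a, b⟫_ℝ = 0) → Φ₁ = ∅ ∨ Φ₂ = ∅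

/-- The reflection in (the hyperplane orthogonal to) a root `α` of squared length `2`. -/
def sRefl (α : E) : Function.End E := fun x => x - ⟪x, α⟫_ℝ • α

/-- The group generated by the reflections in the elements of `S`; since every reflection is
an involution, the submonoid generated by the reflections coincides with the generated group. -/
def genBy (S : Set E) : Submonoid (Function.End E) :=
  Submonoid.closure (sRefl '' S)

/-- The Weyl group of `Φ`: the group generated by the reflections in all the roots. -/
abbrev WeylGroup (Φ : Set E) : Submonoid (Function.End E) := genBy Φ

/-- A base (set of simple roots) of `Φ`, together with the (unique) integer coefficients
`coeff δ γ` of each root `δ` with respect to the simple roots. -/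
structure Base (Φ : Set E) where
  Δ : Finset E
  coeff : E → E → ℤ
  subset : ↑Δ ⊆ Φ
  indep : LinearIndependent ℝ (fun γ : {x : E // x ∈ Δ} => (γ : E))
  expand : ∀ δ ∈ Φ, δ = ∑ γ ∈ Δ, (coeff δ γ : ℝ) • γ
  sign : ∀ δ ∈ Φ, (∀ γ ∈ Δ, 0 ≤ coeff δ γ) ∨ (∀ γ ∈ Δ, coeff δ γ ≤ 0)

variable {Φ : Set E}

/-- `θ` is the highest root of `Φ` with respect to the base `B`. -/
def IsHighest (B : Base Φ) (θ : E) : Prop :=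
  θ ∈ Φ ∧ ∀ δ ∈ Φ, ∀ γ ∈ B.Δ, B.coeff δ γ ≤ B.coeff θ γ

/-- `α` is a Heisenberg simple root: the highest root `θ` has `α`-coefficient `2`, and every
root other than `±θ` has `α`-coefficient in `{-1, 0, 1}`. -/
def IsHeisenberg (B : Base Φ) (θ α : E) : Prop :=
  B.coeff θ α = 2 ∧
    ∀ δ ∈ Φ, δ ≠ θ → δ ≠ -θ →
      B.coeff δ α = -1 ∨ B.coeff δ α = 0 ∨ B.coeff δ α = 1

/-- `α` is an extreme simple root with (unique) neighbour `β`. -/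
def IsExtreme (B : Base Φ) (α β : E) : Prop :=
  β ∈ B.Δ ∧ β ≠ α ∧ ⟪α, β⟫_ℝ ≠ 0 ∧
    ∀ γ ∈ B.Δ, γ ≠ α → ⟪α, γ⟫_ℝ ≠ 0 → γ = β

/-- `Φ_α`: the roots with `α`-coefficient `1` that are orthogonal to `α`. -/
def PhiSet (B : Base Φ) (α : E) : Set E :=
  {ε ∈ Φ | B.coeff ε α = 1 ∧ ⟪ε, α⟫_ℝ = 0}

/-- `Ψ_α`: the roots `ε` with `α`-coefficient `1` and `⟪ε, α⟫ ≤ 0`. -/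
def PsiSet (B : Base Φ) (α : E) : Set E :=
  {ε ∈ Φ | B.coeff ε α = 1 ∧ ⟪ε, α⟫_ℝ ≤ 0}

namespace Base

variable (B : Base Φ)

theorem coeff_eq_of_eq_sum {δ : E} (hδ : δ ∈ Φ) (d : E → ℝ) (hd : δ = ∑ γ ∈ B.Δ, d γ • γ)
    {γ : E} (hγ : γ ∈ B.Δ) : (B.coeff δ γ : ℝ) = d γ := by
  have hzero : ∑ i : {x : E // x ∈ B.Δ}, (d i - (B.coeff δ i : ℝ)) • (i : E) = 0 := by
    rw [Finset.sum_coe_sort B.Δ (fun x => (d x - (B.coeff δ x : ℝ)) • x)]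
    simp only [sub_smul, Finset.sum_sub_distrib]
    rw [← hd, ← B.expand δ hδ, sub_self]
  have h := Fintype.linearIndependent_iff.mp B.indep _ hzero ⟨γ, hγ⟩
  exact (sub_eq_zero.mp h).symm

theorem coeff_sub {δ ε : E} (hδ : δ ∈ Φ) (hε : ε ∈ Φ) (hδε : δ - ε ∈ Φ) {γ : E}
    (hγ : γ ∈ B.Δ) : B.coeff (δ - ε) γ = B.coeff δ γ - B.coeff ε γ := by
  have hsum : δ - ε = ∑ γ ∈ B.Δ, ((B.coeff δ γ : ℝ) - B.coeff ε γ) • γ := by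
    simp only [sub_smul, Finset.sum_sub_distrib, ← B.expand δ hδ, ← B.expand ε hε]
  exact_mod_cast B.coeff_eq_of_eq_sum hδε _ hsum hγ

theorem coeff_neg {δ : E} (hδ : δ ∈ Φ) (hnδ : -δ ∈ Φ) {γ : E} (hγ : γ ∈ B.Δ) :
    B.coeff (-δ) γ = -B.coeff δ γ := by
  have hsum : -δ = ∑ γ ∈ B.Δ, (-(B.coeff δ γ : ℝ)) • γ := by
    simp only [neg_smul, Finset.sum_neg_distrib, ← B.expand δ hδ]
  exact_mod_cast B.coeff_eq_of_eq_sum hnδ _ hsum hγ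

theorem coeff_simple_of_ne {β γ : E} (hβ : β ∈ B.Δ) (hγ : γ ∈ B.Δ) (hne : γ ≠ β) :
    B.coeff β γ = 0 := by
  classical
  have hsum : β = ∑ γ ∈ B.Δ, (if γ = β then (1 : ℝ) else 0) • γ := by
    simp [ite_smul, Finset.sum_ite_eq', hβ]
  exact_mod_cast (B.coeff_eq_of_eq_sum (B.subset hβ) _ hsum hγ).trans (if_neg hne)

end Base

namespace IsRootSystem

variable (hΦ : IsRootSystem Φ)
include hΦ

theorem inner_sub_self_eq {μ ν : E} (hμ : μ ∈ Φ) (hν : ν ∈ Φ) :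
    ⟪μ - ν, μ - ν⟫_ℝ = 4 - 2 * ⟪μ, ν⟫_ℝ := by
  rw [real_inner_sub_sub_self, hΦ.norm_two μ hμ, hΦ.norm_two ν hν]
  ring

theorem inner_le_two {μ ν : E} (hμ : μ ∈ Φ) (hν : ν ∈ Φ) : ⟪μ, ν⟫_ℝ ≤ 2 := by
  linarith [hΦ.inner_sub_self_eq hμ hν, real_inner_self_nonneg (x := μ - ν)]

theorem eq_of_inner_eq_two {μ ν : E} (hμ : μ ∈ Φ) (hν : ν ∈ Φ) (h : ⟪μ, ν⟫_ℝ = 2) :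
    μ = ν := by
  have hzero : ⟪μ - ν, μ - ν⟫_ℝ = 0 := by
    rw [hΦ.inner_sub_self_eq hμ hν, h]
    norm_num
  exact sub_eq_zero.mp (inner_self_eq_zero.mp hzero)

theorem inner_le_one_of_ne {μ ν : E} (hμ : μ ∈ Φ) (hν : ν ∈ Φ) (hne : μ ≠ ν) :
    ⟪μ, ν⟫_ℝ ≤ 1 := by
  obtain ⟨n, hn⟩ := hΦ.cartan_int μ hμ ν hν
  have hle : n ≤ 2 := by exact_mod_cast hn ▸ hΦ.inner_le_two hμ hν
  have hne2 : n ≠ 2 := fun h2 => hne (hΦ.eq_of_inner_eq_two hμ hν (by rw [hn, h2]; norm_num))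
  rw [hn]
  exact_mod_cast (by omega : n ≤ 1)

theorem inner_nonpos_of_sub_notMem {μ ν : E} (hμ : μ ∈ Φ) (hν : ν ∈ Φ) (hne : μ ≠ ν)
    (hsub : μ - ν ∉ Φ) : ⟪μ, ν⟫_ℝ ≤ 0 := by
  obtain ⟨n, hn⟩ := hΦ.cartan_int μ hμ ν hν
  have hle : n ≤ 1 := by exact_mod_cast hn ▸ hΦ.inner_le_one_of_ne hμ hν hne
  have hne1 : n ≠ 1 := by
    rintro rfl
    have h := hΦ.reflect_mem ν hν μ hμ
    rw [hn, Int.cast_one, one_smul] at h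
    exact hsub h
  rw [hn]
  exact_mod_cast (by omega : n ≤ 0)

end IsRootSystem

namespace IsHeisenberg

variable {B : Base Φ} {θ α : E}

theorem eq_of_coeff_eq_two (hH : IsHeisenberg B θ α) (hθ : θ ∈ Φ) (hα : α ∈ B.Δ)
    {δ : E} (hδ : δ ∈ Φ) (h : B.coeff δ α = 2) : δ = θ := by
  by_contra hne
  have hnθ : δ ≠ -θ := by
    rintro rfl
    have := B.coeff_neg hθ hδ hα
    have := hH.1
    omega
  rcases hH.2 δ hδ hne hnθ with h' | h' | h' <;> omega

theorem coeff_le_one (hH : IsHeisenberg B θ α) (hθ : IsHighest B θ)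
    (hα : α ∈ B.Δ) {δ : E} (hδ : δ ∈ Φ) (hne : δ ≠ θ) : B.coeff δ α ≤ 1 := by
  have hle : B.coeff δ α ≤ 2 := hH.1 ▸ hθ.2 δ hδ α hα
  have hne2 : B.coeff δ α ≠ 2 := fun h => hne (hH.eq_of_coeff_eq_two hθ.1 hα hδ h)
  omega

theorem inner_nonpos (hH : IsHeisenberg B θ α) (hΦ : IsRootSystem Φ) (hθ : θ ∈ Φ)
    (hα : α ∈ B.Δ) {β : E} (hβ : β ∈ B.Δ) (hβα : β ≠ α) : ⟪θ, β⟫_ℝ ≤ 0 := by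
  have hβΦ := B.subset hβ
  have hcβ : B.coeff β α = 0 := B.coeff_simple_of_ne hβ hα hβα.symm
  have hθβ : θ ≠ β := by
    rintro rfl
    have := hH.1
    omega
  refine hΦ.inner_nonpos_of_sub_notMem hθ hβΦ hθβ fun hsub => hΦ.nonzero ?_
  have hc : B.coeff (θ - β) α = 2 := by rw [B.coeff_sub hθ hβΦ hsub hα, hcβ, hH.1]; rfl
  have hsub_eq : θ - β = θ := hH.eq_of_coeff_eq_two hθ hα hsub hc
  rwa [sub_eq_self.mp hsub_eq] at hβΦ

end IsHeisenberg

theorem Z_eigenvalue_le_two_general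
    (hΦ : IsRootSystem Φ) (B : Base Φ)
    {θ α β : E} (hθ : IsHighest B θ) (hα : α ∈ B.Δ)
    (hext : IsExtreme B α β) (hH : IsHeisenberg B θ α)
    {μ : E} (hμ : μ ∈ Φ) :
    ⟪μ, β⟫_ℝ + (B.coeff μ α : ℝ) ≤ 2 := by
  obtain ⟨hβ, hβα, -, -⟩ := hext
  have hβΦ := B.subset hβ
  by_cases hμθ : μ = θ
  · subst hμθ
    have := hH.inner_nonpos hΦ hθ.1 hα hβ hβα
    rw [hH.1]
    push_cast
    linarith
  have hc : (B.coeff μ α : ℝ) ≤ 1 := by exact_mod_cast hH.coeff_le_one hθ hα hμ hμθ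
  by_cases hμβ : μ = β
  · subst hμβ
    rw [hΦ.norm_two μ hμ, B.coeff_simple_of_ne hβ hα hβα.symm]
    norm_num
  linarith [hΦ.inner_le_one_of_ne hμ hβΦ hμβ]

/-- For an extreme Heisenberg root `α` with neighbour `β`, every root `μ` satisfies
`⟪μ, β⟫ + c_α(μ) ≤ 2`: the maximal eigenvalue of `Z = β^∨ + S_α/2` on `𝔤` is `2`. -/
theorem Z_eigenvalue_le_two
    (hΦ : IsRootSystem Φ) (hirr : IsIrreducible Φ) (B : Base Φ)
    {θ α β : E} (hθ : IsHighest B θ) (hα : α ∈ B.Δ)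
    (hext : IsExtreme B α β) (hH : IsHeisenberg B θ α)
    {μ : E} (hμ : μ ∈ Φ) :
    ⟪μ, β⟫_ℝ + (B.coeff μ α : ℝ) ≤ 2 :=
  Z_eigenvalue_le_two_general hΦ B hθ hα hext hH hμ

end PaperRS
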